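/- For every n ≥ 1, the function Q_{2n}(·;ζ) is an even polynomial of degree exactly 2n, and it has 2n distinct real simple zeros, which come in pairs ±z_{1,n}, …, ±z_{n,n} with 1 < z_{1,n} < ⋯ < z_{n,n}. Moreover, each open interval (x_{i,n+1}^(0), x_{i+1,n+1}^(0)) between consecutive zeros of P_{n+1}^(0)(·;ζ), for i = 1,…,n, contains exactly one zero z_{i,n} of Q_{2n}(·;ζ). -/
import Mathlib


open MeasureTheory Polynomial

noncomputable def besselK (n : ℕ) (ζ : ℝ) : ℝ :=
  ∫ t in Set.Ioi (0 : ℝ), Real.cosh ((n : ℝ) * t) * Real.exp (-ζ * Real.cosh t)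

noncomputable def Gfun (ζ : ℝ) : ℝ := besselK 2 ζ / besselK 1 ζ

noncomputable def wgt (ℓ : ℕ) (ζ x : ℝ) : ℝ :=
  (x ^ 2 - 1) ^ ((ℓ : ℝ) - 1 / 2) * Real.exp (-ζ * x) / besselK 1 ζ

-- span lemma
lemma aux_span (P : ℕ → Polynomial ℝ) (hdeg : ∀ k, (P k).natDegree = k)
    (hlc : ∀ k, (P k).leadingCoeff ≠ 0) :
    ∀ d (p : Polynomial ℝ), p.natDegree ≤ d →
      ∃ a : ℕ → ℝ, p = ∑ k ∈ Finset.range (d+1), C (a k) * P k := by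
  intro d
  induction d with
  | zero =>
    intro p hp
    set l := (P 0).coeff 0 with hl
    refine ⟨fun _ => p.coeff 0 / l, ?_⟩
    have h0 : P 0 = C l := (Polynomial.eq_C_of_natDegree_eq_zero (hdeg 0))
    have hp0 : p = C (p.coeff 0) := (Polynomial.eq_C_of_natDegree_eq_zero (Nat.le_zero.mp hp))
    have hne : l ≠ 0 := by
      have := hlc 0
      rwa [Polynomial.leadingCoeff, hdeg 0] at this
    rw [Finset.sum_range_one]
    conv_lhs => rw [hp0]
    rw [h0, ← Polynomial.C_mul, div_mul_cancel₀ _ hne]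
  | succ d ih =>
    intro p hp
    set c := p.coeff (d+1) / (P (d+1)).leadingCoeff with hc
    set q := p - C c * P (d+1) with hqdef
    have hlcd : (P (d+1)).leadingCoeff = (P (d+1)).coeff (d+1) := by
      rw [Polynomial.leadingCoeff, hdeg (d+1)]
    have hq : q.natDegree ≤ d := by
      rw [Polynomial.natDegree_le_iff_coeff_eq_zero]
      intro N hN
      rcases eq_or_lt_of_le (Nat.succ_le_of_lt hN) with h | h
      · -- N = d+1
        rw [hqdef]
        simp only [Polynomial.coeff_sub, Polynomial.coeff_C_mul]
        rw [← h, ← hlcd, hc, div_mul_cancel₀ _ (hlc (d+1)), sub_self]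
      · rw [hqdef]
        simp only [Polynomial.coeff_sub, Polynomial.coeff_C_mul]
        have h1 : p.coeff N = 0 := Polynomial.coeff_eq_zero_of_natDegree_lt (lt_of_le_of_lt hp h)
        have h2 : (P (d+1)).coeff N = 0 := Polynomial.coeff_eq_zero_of_natDegree_lt (by rw [hdeg]; exact h)
        rw [h1, h2, mul_zero, sub_self]
    obtain ⟨a, ha⟩ := ih q hq
    refine ⟨fun k => if k = d+1 then c else a k, ?_⟩
    rw [Finset.sum_range_succ]
    have hterm : C (if d+1 = d+1 then c else a (d+1)) * P (d+1) = C c * P (d+1) := by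
      rw [if_pos rfl]
    have : ∑ k ∈ Finset.range (d+1), C (if k = d+1 then c else a k) * P k
        = ∑ k ∈ Finset.range (d+1), C (a k) * P k := by
      apply Finset.sum_congr rfl
      intro k hk
      have : k < d + 1 := Finset.mem_range.mp hk
      rw [if_neg (by omega)]
    rw [this, hterm, ← ha, hqdef]
    ring


section WeightLemmas

variable (w : ℝ → ℝ) (hwc : ContinuousOn w (Set.Ioi 1))
  (hwpos : ∀ x ∈ Set.Ioi (1:ℝ), 0 < w x)
  (P : ℕ → Polynomial ℝ) (hdeg : ∀ k, (P k).natDegree = k)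
  (hlc : ∀ k, (P k).leadingCoeff ≠ 0)
  (hint : ∀ m, IntegrableOn (fun x => (P m).eval x * (P m).eval x * w x) (Set.Ioi 1) volume)

include hwc hwpos hdeg hlc hint

lemma aux_w_integrable : IntegrableOn w (Set.Ioi 1) volume := by
  have h0 : P 0 = C ((P 0).coeff 0) := Polynomial.eq_C_of_natDegree_eq_zero (hdeg 0)
  set l := (P 0).coeff 0 with hl
  have hne : l ≠ 0 := by
    have := hlc 0
    rwa [Polynomial.leadingCoeff, hdeg 0] at this
  have h := hint 0
  have heq : (fun x => (P 0).eval x * (P 0).eval x * w x) = fun x => (l * l) * w x := by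
    funext x; rw [h0]; simp
  rw [heq] at h
  have h3 := h.const_mul ((l*l)⁻¹)
  have h2 : (fun x => (l*l)⁻¹ * (l * l * w x)) = w := by
    funext x; field_simp
  rwa [h2] at h3

lemma aux_P_mul_w_integrable (m : ℕ) :
    IntegrableOn (fun x => (P m).eval x * w x) (Set.Ioi 1) volume := by
  have hw := aux_w_integrable w hwc hwpos P hdeg hlc hint
  have hbound : IntegrableOn
      (fun x => ((P m).eval x * (P m).eval x * w x + w x) / 2) (Set.Ioi 1) volume := by
    exact (((hint m).add hw).div_const 2)
  apply Integrable.mono' hbound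
  · exact (((P m).continuous_aeval.continuousOn.mul hwc)).aestronglyMeasurable measurableSet_Ioi
  · rw [MeasureTheory.ae_restrict_iff' measurableSet_Ioi]
    filter_upwards with x hx
    have hwx := (hwpos x hx).le
    have h1 : |(P m).eval x| ≤ ((P m).eval x * (P m).eval x + 1) / 2 := by nlinarith [sq_nonneg ((P m).eval x), sq_nonneg (|(P m).eval x| - 1), abs_nonneg ((P m).eval x), sq_abs ((P m).eval x)]
    have : ‖(P m).eval x * w x‖ = |(P m).eval x| * w x := by
      rw [norm_mul, Real.norm_eq_abs, Real.norm_eq_abs, abs_of_nonneg hwx]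
    rw [this]
    calc |(P m).eval x| * w x ≤ (((P m).eval x * (P m).eval x + 1) / 2) * w x := by
          apply mul_le_mul_of_nonneg_right h1 hwx
      _ = ((P m).eval x * (P m).eval x * w x + w x) / 2 := by ring

lemma aux_poly_integrable (p : Polynomial ℝ) :
    IntegrableOn (fun x => p.eval x * w x) (Set.Ioi 1) volume := by
  obtain ⟨a, ha⟩ := aux_span P hdeg hlc p.natDegree p le_rfl
  set d := p.natDegree with hd
  have heq : (fun x => p.eval x * w x)
      = fun x => ∑ k ∈ Finset.range (d + 1), a k * ((P k).eval x * w x) := by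
    funext x
    conv_lhs => rw [ha]
    rw [Polynomial.eval_finset_sum, Finset.sum_mul]
    apply Finset.sum_congr rfl
    intro k _
    simp [mul_assoc]
  rw [heq]
  apply MeasureTheory.integrable_finset_sum
  intro k _
  exact ((aux_P_mul_w_integrable w hwc hwpos P hdeg hlc hint k).const_mul (a k))

end WeightLemmas

section WeightLemmas2

variable (w : ℝ → ℝ) (hwc : ContinuousOn w (Set.Ioi 1))
  (hwpos : ∀ x ∈ Set.Ioi (1:ℝ), 0 < w x)
  (P : ℕ → Polynomial ℝ) (hdeg : ∀ k, (P k).natDegree = k)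
  (hlc : ∀ k, (P k).leadingCoeff ≠ 0)
  (hint : ∀ m, IntegrableOn (fun x => (P m).eval x * (P m).eval x * w x) (Set.Ioi 1) volume)
  (horth : ∀ m k, (∫ x in Set.Ioi (1:ℝ), (P m).eval x * (P k).eval x * w x)
      = if m = k then (1:ℝ) else 0)

include hwc hwpos hdeg hlc hint horth

lemma aux_orth (N : ℕ) (q : Polynomial ℝ) (hqd : q.natDegree < N) :
    (∫ x in Set.Ioi (1:ℝ), (P N).eval x * q.eval x * w x) = 0 := by
  have hN : 1 ≤ N := Nat.one_le_iff_ne_zero.mpr (by omega)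
  obtain ⟨a, ha⟩ := aux_span P hdeg hlc (N - 1) q (by omega)
  have hrange : N - 1 + 1 = N := by omega
  rw [hrange] at ha
  have heq : (fun x => (P N).eval x * q.eval x * w x)
      = fun x => ∑ k ∈ Finset.range N, a k * ((P N).eval x * (P k).eval x * w x) := by
    funext x
    conv_lhs => rw [ha]
    rw [Polynomial.eval_finset_sum, Finset.mul_sum, Finset.sum_mul]
    apply Finset.sum_congr rfl
    intro k _
    simp only [Polynomial.eval_mul, Polynomial.eval_C]
    ring
  rw [heq, MeasureTheory.integral_finset_sum]
  · apply Finset.sum_eq_zero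
    intro k hk
    rw [MeasureTheory.integral_const_mul, horth N k,
      if_neg (by have := Finset.mem_range.mp hk; omega), mul_zero]
  · intro k _
    have h1 := (aux_poly_integrable w hwc hwpos P hdeg hlc hint (P N * P k)).const_mul (a k)
    have h2 : (fun x => a k * ((P N * P k).eval x * w x))
        = fun x => a k * ((P N).eval x * (P k).eval x * w x) := by
      funext x; simp [Polynomial.eval_mul]
    rwa [h2] at h1

omit horth in
lemma aux_pos (q : Polynomial ℝ) (hq : q ≠ 0) :
    0 < ∫ x in Set.Ioi (1:ℝ), q.eval x * q.eval x * w x := by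
  set f := fun x => q.eval x * q.eval x * w x with hf
  have hnn : 0 ≤ᵐ[volume.restrict (Set.Ioi 1)] f :=
    (MeasureTheory.ae_restrict_iff' measurableSet_Ioi).mpr
      (MeasureTheory.ae_of_all _ fun x hx =>
        mul_nonneg (mul_self_nonneg _) (hwpos x hx).le)
  have hintf : IntegrableOn f (Set.Ioi 1) volume := by
    have h1 := aux_poly_integrable w hwc hwpos P hdeg hlc hint (q * q)
    have h2 : (fun x => (q * q).eval x * w x) = f := by
      funext x; simp [Polynomial.eval_mul, hf]
    rwa [h2] at h1
  rw [MeasureTheory.setIntegral_pos_iff_support_of_nonneg_ae hnn hintf]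
  have hZ : {x : ℝ | q.IsRoot x}.Finite := Polynomial.finite_setOf_isRoot hq
  have hsub : Set.Ioi (1:ℝ) \ {x | q.IsRoot x} ⊆ Function.support f ∩ Set.Ioi 1 := by
    rintro x ⟨hx1, hx2⟩
    refine ⟨?_, hx1⟩
    have hqx : q.eval x ≠ 0 := hx2
    exact mul_ne_zero (mul_ne_zero hqx hqx) (hwpos x hx1).ne'
  have hm : volume (Set.Ioi (1:ℝ) \ {x | q.IsRoot x}) = ⊤ := by
    rw [measure_diff_null (hZ.measure_zero _), Real.volume_Ioi]
  calc (0:ENNReal) < ⊤ := by simp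
    _ = volume (Set.Ioi (1:ℝ) \ {x | q.IsRoot x}) := hm.symm
    _ ≤ volume (Function.support f ∩ Set.Ioi 1) := measure_mono hsub

end WeightLemmas2
lemma aux_dvd (s : Finset ℕ) (x : ℕ → ℝ) (hinj : Set.InjOn x ↑s) (p : Polynomial ℝ)
    (hroot : ∀ k ∈ s, p.eval (x k) = 0) :
    (∏ k ∈ s, (X - C (x k))) ∣ p := by
  apply Finset.prod_dvd_of_coprime
  · intro i hi j hj hij
    have hne : x i ≠ x j := fun h => hij (hinj hi hj h)
    exact (Polynomial.pairwise_coprime_X_sub_C (Function.injective_id) (by simpa using hne) : _)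
  · intro k hk
    exact Polynomial.dvd_iff_isRoot.mpr (hroot k hk)

lemma aux_dvd' (s : Finset ℝ) (p : Polynomial ℝ)
    (hroot : ∀ a ∈ s, p.eval a = 0) :
    (∏ a ∈ s, (X - C a)) ∣ p := by
  apply Finset.prod_dvd_of_coprime
  · intro i _ j _ hij
    exact (Polynomial.pairwise_coprime_X_sub_C (Function.injective_id) hij : _)
  · intro a ha
    exact Polynomial.dvd_iff_isRoot.mpr (hroot a ha)

lemma aux_ivt (f : Polynomial ℝ) (a b : ℝ) (hab : a < b) (h : f.eval a * f.eval b < 0) :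
    ∃ t, a < t ∧ t < b ∧ f.eval t = 0 := by
  have hcont : ContinuousOn (fun t => f.eval t) (Set.Icc a b) :=
    (f.continuous_aeval).continuousOn
  rcases lt_or_ge (f.eval a) 0 with ha | ha
  · have hb : 0 < f.eval b := by nlinarith
    have := intermediate_value_Ioo hab.le hcont
    have h0 : (0:ℝ) ∈ Set.Ioo (f.eval a) (f.eval b) := ⟨ha, hb⟩
    obtain ⟨t, ht, hft⟩ := this h0
    exact ⟨t, ht.1, ht.2, hft⟩
  · have ha' : 0 < f.eval a := by
      rcases ha.lt_or_eq with h1 | h1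
      · exact h1
      · exfalso; rw [← h1] at h; simp at h
    have hb : f.eval b < 0 := by nlinarith
    have := intermediate_value_Ioo' hab.le hcont
    have h0 : (0:ℝ) ∈ Set.Ioo (f.eval b) (f.eval a) := ⟨hb, ha'⟩
    obtain ⟨t, ht, hft⟩ := this h0
    exact ⟨t, ht.1, ht.2, hft⟩
lemma key_lemma
    (w0 w1 : ℝ → ℝ)
    (hw01 : ∀ x ∈ Set.Ioi (1:ℝ), (x^2 - 1) * w0 x = w1 x)
    (AI0 : ∀ p : Polynomial ℝ, IntegrableOn (fun x => p.eval x * w0 x) (Set.Ioi 1) volume)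
    (POS0 : ∀ q : Polynomial ℝ, q ≠ 0 → 0 < ∫ x in Set.Ioi (1:ℝ), q.eval x * q.eval x * w0 x)
    (n : ℕ) (hn : 1 ≤ n)
    (xx : ℕ → ℝ) (hx1 : ∀ i, 1 ≤ i → i ≤ n+1 → 1 < xx i)
    (hxlt : ∀ i j, 1 ≤ i → i < j → j ≤ n+1 → xx i < xx j)
    (hMorth : ∀ u : Polynomial ℝ, u.natDegree ≤ n →
      (∫ x in Set.Ioi (1:ℝ),
        (∏ k ∈ Finset.Icc 1 (n+1), (X - C (xx k))).eval x * u.eval x * w0 x) = 0)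
    (p1 : Polynomial ℝ) (hp1d : p1.natDegree = n)
    (hOR1 : ∀ g : Polynomial ℝ, g.natDegree < n →
      (∫ x in Set.Ioi (1:ℝ), p1.eval x * g.eval x * w1 x) = 0)
    (i : ℕ) (hi1 : 1 ≤ i) (hin : i ≤ n) :
    (p1.eval (xx i) = 0 ↔ p1.eval (xx (i+1)) = 0) ∧
      p1.eval (xx i) * p1.eval (xx (i+1)) ≤ 0 := by
  set M : Polynomial ℝ := ∏ k ∈ Finset.Icc 1 (n+1), (X - C (xx k)) with hM
  have hMmonic : M.Monic := monic_prod_of_monic _ _ fun k _ => monic_X_sub_C _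
  have hMne : M ≠ 0 := hMmonic.ne_zero
  have hMdeg : M.natDegree = n + 1 := by
    rw [hM, Polynomial.natDegree_prod _ _ (fun k _ => Polynomial.X_sub_C_ne_zero _)]
    simp [Polynomial.natDegree_X_sub_C]
  have hxne : ∀ j k, 1 ≤ j → j ≤ n+1 → 1 ≤ k → k ≤ n+1 → j ≠ k → xx j ≠ xx k := by
    intro j k h1 h2 h3 h4 hne
    rcases lt_or_gt_of_ne hne with h | h
    · exact (hxlt j k h1 h h4).ne
    · exact (hxlt k j h3 h h2).ne'
  have hinj : Set.InjOn xx ↑(Finset.Icc 1 (n+1)) := by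
    intro j hj k hk h
    by_contra hne
    simp only [Finset.coe_Icc, Set.mem_Icc] at hj hk
    exact hxne j k hj.1 hj.2 hk.1 hk.2 hne h
  -- the gap polynomial g
  set s : Finset ℕ := Finset.Icc 1 (n+1) \ {i, i+1} with hs
  set g : Polynomial ℝ := ∏ k ∈ s, (X - C (xx k)) with hg
  have hsub : ({i, i+1} : Finset ℕ) ⊆ Finset.Icc 1 (n+1) := by
    intro k hk
    simp only [Finset.mem_insert, Finset.mem_singleton] at hk
    simp only [Finset.mem_Icc]
    omega
  have hscard : s.card = n - 1 := by
    rw [hs, Finset.card_sdiff_of_subset hsub, Nat.card_Icc,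
      Finset.card_insert_of_notMem (by simp), Finset.card_singleton]
    omega
  have hgdeg : g.natDegree = n - 1 := by
    rw [hg, Polynomial.natDegree_prod _ _ (fun k _ => Polynomial.X_sub_C_ne_zero _)]
    simp [Polynomial.natDegree_X_sub_C, hscard]
  have hmem_s : ∀ k, k ∈ s ↔ (1 ≤ k ∧ k ≤ n+1 ∧ k ≠ i ∧ k ≠ i+1) := by
    intro k
    simp only [hs, Finset.mem_sdiff, Finset.mem_Icc, Finset.mem_insert, Finset.mem_singleton]
    constructor
    · rintro ⟨⟨h1, h2⟩, h3⟩
      exact ⟨h1, h2, fun h => h3 (Or.inl h), fun h => h3 (Or.inr h)⟩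
    · rintro ⟨h1, h2, h3, h4⟩
      exact ⟨⟨h1, h2⟩, fun h => h.elim h3 h4⟩
  have hgx : ∀ k, 1 ≤ k → k ≤ n+1 → k ≠ i → k ≠ i+1 → g.eval (xx k) = 0 := by
    intro k h1 h2 h3 h4
    rw [hg, Polynomial.eval_prod]
    refine Finset.prod_eq_zero ((hmem_s k).mpr ⟨h1, h2, h3, h4⟩) ?_
    simp
  have hgne : ∀ j, 1 ≤ j → j ≤ n+1 → (j = i ∨ j = i+1) → g.eval (xx j) ≠ 0 := by
    intro j h1 h2 _hj
    rw [hg, Polynomial.eval_prod]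
    refine Finset.prod_ne_zero_iff.mpr ?_
    intro k hk
    obtain ⟨hk1, hk2, hk3, hk4⟩ := (hmem_s k).mp hk
    have hjk : j ≠ k := by
      rcases _hj with h | h <;> omega
    simp only [Polynomial.eval_sub, Polynomial.eval_X, Polynomial.eval_C]
    exact sub_ne_zero.mpr (hxne j k h1 h2 hk1 hk2 hjk)
  have hgi : g.eval (xx i) ≠ 0 := hgne i hi1 (by omega) (Or.inl rfl)
  have hgi1 : g.eval (xx (i+1)) ≠ 0 := hgne (i+1) (by omega) (by omega) (Or.inr rfl)
  have hxii1 : xx i < xx (i+1) := hxlt i (i+1) hi1 (by omega) (by omega)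
  -- Lagrange-type polynomials
  set li : Polynomial ℝ := C (((xx i - xx (i+1)) * g.eval (xx i))⁻¹) * ((X - C (xx (i+1))) * g)
    with hli
  set li1 : Polynomial ℝ := C (((xx (i+1) - xx i) * g.eval (xx (i+1)))⁻¹) * ((X - C (xx i)) * g)
    with hli1
  have hlii : li.eval (xx i) = 1 := by
    rw [hli]
    simp only [Polynomial.eval_mul, Polynomial.eval_C, Polynomial.eval_sub, Polynomial.eval_X]
    exact inv_mul_cancel₀ (mul_ne_zero (sub_ne_zero.mpr hxii1.ne) hgi)
  have hli1i1 : li1.eval (xx (i+1)) = 1 := by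
    rw [hli1]
    simp only [Polynomial.eval_mul, Polynomial.eval_C, Polynomial.eval_sub, Polynomial.eval_X]
    exact inv_mul_cancel₀ (mul_ne_zero (sub_ne_zero.mpr hxii1.ne') hgi1)
  have hli0 : ∀ k, 1 ≤ k → k ≤ n+1 → k ≠ i → li.eval (xx k) = 0 := by
    intro k h1 h2 h3
    rw [hli]
    simp only [Polynomial.eval_mul, Polynomial.eval_C, Polynomial.eval_sub, Polynomial.eval_X]
    by_cases hk : k = i+1
    · subst hk; simp
    · rw [hgx k h1 h2 h3 hk]; ring
  have hli10 : ∀ k, 1 ≤ k → k ≤ n+1 → k ≠ i+1 → li1.eval (xx k) = 0 := by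
    intro k h1 h2 h3
    rw [hli1]
    simp only [Polynomial.eval_mul, Polynomial.eval_C, Polynomial.eval_sub, Polynomial.eval_X]
    by_cases hk : k = i
    · subst hk; simp
    · rw [hgx k h1 h2 hk h3]; ring
  have hlid : li.natDegree ≤ n := by
    refine le_trans (Polynomial.natDegree_C_mul_le _ _) (le_trans Polynomial.natDegree_mul_le ?_)
    rw [Polynomial.natDegree_X_sub_C, hgdeg]
    omega
  have hli1d : li1.natDegree ≤ n := by
    refine le_trans (Polynomial.natDegree_C_mul_le _ _) (le_trans Polynomial.natDegree_mul_le ?_)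
    rw [Polynomial.natDegree_X_sub_C, hgdeg]
    omega
  have hMu : ∀ u : Polynomial ℝ, IntegrableOn (fun x => M.eval x * u.eval x * w0 x)
      (Set.Ioi 1) volume := by
    intro u
    have h1 := AI0 (M * u)
    have h2 : (fun x => (M*u).eval x * w0 x) = fun x => M.eval x * u.eval x * w0 x := by
      funext x; simp [Polynomial.eval_mul]
    rwa [h2] at h1
  have hlam : ∀ L : Polynomial ℝ, L.natDegree ≤ n →
      (∀ k, 1 ≤ k → k ≤ n+1 → L.eval (xx k) = 0 ∨ L.eval (xx k) = 1) →
      (∫ x in Set.Ioi (1:ℝ), L.eval x * w0 x)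
        = ∫ x in Set.Ioi (1:ℝ), L.eval x * L.eval x * w0 x := by
    intro L hLd hLval
    have hroot : ∀ k ∈ Finset.Icc 1 (n+1), (L*L - L).eval (xx k) = 0 := by
      intro k hk
      obtain ⟨h1, h2⟩ := Finset.mem_Icc.mp hk
      rcases hLval k h1 h2 with h | h <;>
        simp [Polynomial.eval_sub, Polynomial.eval_mul, h]
    obtain ⟨u, hu⟩ := aux_dvd (Finset.Icc 1 (n+1)) xx hinj (L*L - L) hroot
    rw [← hM] at hu
    have hud : u.natDegree ≤ n := by
      by_cases hu0 : u = 0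
      · simp [hu0]
      · have h1 : (L*L - L).natDegree = (n+1) + u.natDegree := by
          rw [hu, Polynomial.natDegree_mul hMne hu0, hMdeg]
        have h2 : (L*L - L).natDegree ≤ 2*n := by
          refine le_trans (Polynomial.natDegree_sub_le _ _) ?_
          have h3 : (L*L).natDegree ≤ 2*n :=
            le_trans Polynomial.natDegree_mul_le (by omega)
          exact max_le h3 (by omega)
        omega
    have hsplit : (fun x => L.eval x * L.eval x * w0 x)
        = fun x => L.eval x * w0 x + M.eval x * u.eval x * w0 x := by
      funext x
      have hx : L.eval x * L.eval x - L.eval x = M.eval x * u.eval x := by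
        have h := congrArg (Polynomial.eval x) hu
        simpa [Polynomial.eval_sub, Polynomial.eval_mul] using h
      have h2 : L.eval x * L.eval x = L.eval x + M.eval x * u.eval x := by linarith
      rw [h2]
      ring
    rw [hsplit, MeasureTheory.integral_add (AI0 L) (hMu u), hMorth u hud, add_zero]
  have hlival : ∀ k, 1 ≤ k → k ≤ n+1 → li.eval (xx k) = 0 ∨ li.eval (xx k) = 1 := by
    intro k h1 h2
    by_cases hk : k = i
    · subst hk; exact Or.inr hlii
    · exact Or.inl (hli0 k h1 h2 hk)
  have hli1val : ∀ k, 1 ≤ k → k ≤ n+1 → li1.eval (xx k) = 0 ∨ li1.eval (xx k) = 1 := by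
    intro k h1 h2
    by_cases hk : k = i+1
    · subst hk; exact Or.inr hli1i1
    · exact Or.inl (hli10 k h1 h2 hk)
  have hlipos : 0 < ∫ x in Set.Ioi (1:ℝ), li.eval x * w0 x := by
    rw [hlam li hlid hlival]
    exact POS0 li (fun h => by simp [h] at hlii)
  have hli1pos : 0 < ∫ x in Set.Ioi (1:ℝ), li1.eval x * w0 x := by
    rw [hlam li1 hli1d hli1val]
    exact POS0 li1 (fun h => by simp [h] at hli1i1)
  set F : Polynomial ℝ := (X^2 - 1) * (p1 * g) with hF
  have hFd : F.natDegree ≤ 2*n + 1 := by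
    have hX2 : ((X:Polynomial ℝ)^2 - 1).natDegree ≤ 2 :=
      le_trans (Polynomial.natDegree_sub_le _ _) (by simp)
    refine le_trans Polynomial.natDegree_mul_le ?_
    have hpg : (p1 * g).natDegree ≤ n + (n-1) :=
      le_trans Polynomial.natDegree_mul_le (by rw [hp1d, hgdeg])
    omega
  have hFval : ∀ k, 1 ≤ k → k ≤ n+1 → k ≠ i → k ≠ i+1 → F.eval (xx k) = 0 := by
    intro k h1 h2 h3 h4
    rw [hF]
    simp [Polynomial.eval_mul, hgx k h1 h2 h3 h4]
  set H : Polynomial ℝ := F - (C (F.eval (xx i)) * li + C (F.eval (xx (i+1))) * li1) with hH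
  have hHroot : ∀ k ∈ Finset.Icc 1 (n+1), H.eval (xx k) = 0 := by
    intro k hk
    obtain ⟨h1, h2⟩ := Finset.mem_Icc.mp hk
    rw [hH]
    simp only [Polynomial.eval_sub, Polynomial.eval_add, Polynomial.eval_mul, Polynomial.eval_C]
    by_cases hki : k = i
    · rw [hki]
      rw [hlii, hli10 i hi1 (by omega) (by omega)]
      ring
    · by_cases hki1 : k = i+1
      · rw [hki1]
        rw [hli1i1, hli0 (i+1) (by omega) (by omega) (by omega)]
        ring
      · rw [hFval k h1 h2 hki hki1, hli0 k h1 h2 hki, hli10 k h1 h2 hki1]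
        ring
  obtain ⟨u, hu⟩ := aux_dvd (Finset.Icc 1 (n+1)) xx hinj H hHroot
  rw [← hM] at hu
  have hud : u.natDegree ≤ n := by
    by_cases hu0 : u = 0
    · simp [hu0]
    · have h1 : H.natDegree = (n+1) + u.natDegree := by
        rw [hu, Polynomial.natDegree_mul hMne hu0, hMdeg]
      have h2 : H.natDegree ≤ 2*n + 1 := by
        refine le_trans (Polynomial.natDegree_sub_le _ _) (max_le hFd ?_)
        refine le_trans (Polynomial.natDegree_add_le _ _) (max_le ?_ ?_)
        · exact le_trans (Polynomial.natDegree_C_mul_le _ _) (by omega)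
        · exact le_trans (Polynomial.natDegree_C_mul_le _ _) (by omega)
      omega
  have hFsplit : (fun x => F.eval x * w0 x)
      = fun x => F.eval (xx i) * (li.eval x * w0 x)
          + (F.eval (xx (i+1)) * (li1.eval x * w0 x) + M.eval x * u.eval x * w0 x) := by
    funext x
    have hx : H.eval x = M.eval x * u.eval x := by
      have h := congrArg (Polynomial.eval x) hu
      simpa [Polynomial.eval_mul] using h
    have hx2 : F.eval x - (F.eval (xx i) * li.eval x + F.eval (xx (i+1)) * li1.eval x)
        = M.eval x * u.eval x := by
      rw [← hx, hH]
      simp [Polynomial.eval_sub, Polynomial.eval_add, Polynomial.eval_mul]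
    have h2 : F.eval x = F.eval (xx i) * li.eval x + F.eval (xx (i+1)) * li1.eval x
        + M.eval x * u.eval x := by linarith
    rw [h2]
    ring
  have hint1 : (∫ x in Set.Ioi (1:ℝ), F.eval x * w0 x)
      = F.eval (xx i) * (∫ x in Set.Ioi (1:ℝ), li.eval x * w0 x)
        + F.eval (xx (i+1)) * (∫ x in Set.Ioi (1:ℝ), li1.eval x * w0 x) := by
    have hI1 : Integrable (fun x => F.eval (xx i) * (li.eval x * w0 x))
        (volume.restrict (Set.Ioi 1)) := (AI0 li).const_mul _
    have hI2 : Integrable (fun x => F.eval (xx (i+1)) * (li1.eval x * w0 x))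
        (volume.restrict (Set.Ioi 1)) := (AI0 li1).const_mul _
    have hI3 : Integrable (fun x => M.eval x * u.eval x * w0 x)
        (volume.restrict (Set.Ioi 1)) := hMu u
    have hI23 : Integrable (fun x => F.eval (xx (i+1)) * (li1.eval x * w0 x)
        + M.eval x * u.eval x * w0 x) (volume.restrict (Set.Ioi 1)) := hI2.add hI3
    rw [hFsplit]
    rw [MeasureTheory.integral_add hI1 hI23]
    rw [MeasureTheory.integral_add hI2 hI3]
    rw [MeasureTheory.integral_const_mul, MeasureTheory.integral_const_mul, hMorth u hud,
      add_zero]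
  have hint0 : (∫ x in Set.Ioi (1:ℝ), F.eval x * w0 x) = 0 := by
    have hcong : (∫ x in Set.Ioi (1:ℝ), F.eval x * w0 x)
        = ∫ x in Set.Ioi (1:ℝ), p1.eval x * g.eval x * w1 x := by
      apply MeasureTheory.setIntegral_congr_fun measurableSet_Ioi
      intro x hx
      have hxid := hw01 x hx
      simp only [hF, Polynomial.eval_mul, Polynomial.eval_sub, Polynomial.eval_pow,
        Polynomial.eval_X, Polynomial.eval_one]
      rw [← hxid]
      ring
    rw [hcong]
    exact hOR1 g (by rw [hgdeg]; omega)
  have hXi : 0 < (xx i)^2 - 1 := by nlinarith [hx1 i hi1 (by omega : i ≤ n+1)]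
  have hXi1 : 0 < (xx (i+1))^2 - 1 := by
    nlinarith [hx1 (i+1) (by omega) (by omega : i+1 ≤ n+1)]
  have hGG : 0 < g.eval (xx i) * g.eval (xx (i+1)) := by
    rw [hg, Polynomial.eval_prod, Polynomial.eval_prod, ← Finset.prod_mul_distrib]
    apply Finset.prod_pos
    intro k hk
    obtain ⟨h1, h2, h3, h4⟩ := (hmem_s k).mp hk
    simp only [Polynomial.eval_sub, Polynomial.eval_X, Polynomial.eval_C]
    rcases lt_or_gt_of_ne h3 with hki | hki
    · have e1 : xx k < xx i := hxlt k i h1 hki (by omega)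
      have e2 : xx k < xx (i+1) := hxlt k (i+1) h1 (by omega) (by omega)
      exact mul_pos (by linarith) (by linarith)
    · have hki1 : i + 1 < k := by omega
      have e1 : xx i < xx k := hxlt i k hi1 (by omega) h2
      have e2 : xx (i+1) < xx k := hxlt (i+1) k (by omega) hki1 h2
      exact mul_pos_of_neg_of_neg (by linarith) (by linarith)
  have hFi : F.eval (xx i) = ((xx i)^2 - 1) * (p1.eval (xx i) * g.eval (xx i)) := by
    rw [hF]
    simp only [Polynomial.eval_mul, Polynomial.eval_sub, Polynomial.eval_pow,
      Polynomial.eval_X, Polynomial.eval_one]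
  have hFi1 : F.eval (xx (i+1))
      = ((xx (i+1))^2 - 1) * (p1.eval (xx (i+1)) * g.eval (xx (i+1))) := by
    rw [hF]
    simp only [Polynomial.eval_mul, Polynomial.eval_sub, Polynomial.eval_pow,
      Polynomial.eval_X, Polynomial.eval_one]
  set Li := (∫ x in Set.Ioi (1:ℝ), li.eval x * w0 x) with hLidef
  set Li1 := (∫ x in Set.Ioi (1:ℝ), li1.eval x * w0 x) with hLi1def
  have hkey : (((xx i)^2 - 1) * g.eval (xx i) * Li) * p1.eval (xx i)
      + (((xx (i+1))^2 - 1) * g.eval (xx (i+1)) * Li1) * p1.eval (xx (i+1)) = 0 := by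
    have h := hint1.symm.trans hint0
    rw [hFi, hFi1] at h
    linear_combination h
  set a := ((xx i)^2 - 1) * g.eval (xx i) * Li with hadef
  set b := ((xx (i+1))^2 - 1) * g.eval (xx (i+1)) * Li1 with hbdef
  have hane : a ≠ 0 := mul_ne_zero (mul_ne_zero hXi.ne' hgi) hlipos.ne'
  have hbne : b ≠ 0 := mul_ne_zero (mul_ne_zero hXi1.ne' hgi1) hli1pos.ne'
  have hab : 0 < a * b := by
    have habeq : a * b = (((xx i)^2 - 1) * ((xx (i+1))^2 - 1))
        * ((g.eval (xx i) * g.eval (xx (i+1))) * (Li * Li1)) := by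
      rw [hadef, hbdef]; ring
    rw [habeq]
    exact mul_pos (mul_pos hXi hXi1) (mul_pos hGG (mul_pos hlipos hli1pos))
  clear_value Li Li1 a b
  constructor
  · constructor
    · intro h
      rw [h, mul_zero, zero_add] at hkey
      rcases mul_eq_zero.mp hkey with h' | h'
      · exact absurd h' hbne
      · exact h'
    · intro h
      rw [h, mul_zero, add_zero] at hkey
      rcases mul_eq_zero.mp hkey with h' | h'
      · exact absurd h' hane
      · exact h'
  · have h2 : (a*b) * (p1.eval (xx i) * p1.eval (xx (i+1)))
        = -((b * p1.eval (xx (i+1)))^2) := by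
      linear_combination (b * p1.eval (xx (i+1))) * hkey
    have h3 : (a*b) * (p1.eval (xx i) * p1.eval (xx (i+1))) ≤ 0 := by
      rw [h2]; exact neg_nonpos.mpr (sq_nonneg _)
    by_contra hcon
    push_neg at hcon
    exact absurd (mul_pos hab hcon) (not_lt.mpr h3)


lemma besselK_nonneg (m : ℕ) (ζ : ℝ) : 0 ≤ besselK m ζ := by
  apply MeasureTheory.setIntegral_nonneg measurableSet_Ioi
  intro t _
  exact mul_nonneg (Real.cosh_pos _).le (Real.exp_pos _).le

lemma wgt_contOn (ℓ : ℕ) (ζ : ℝ) : ContinuousOn (wgt ℓ ζ) (Set.Ioi 1) := by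
  unfold wgt
  apply ContinuousOn.div_const
  apply ContinuousOn.mul
  · apply ContinuousOn.rpow_const
    · exact ((continuous_pow 2).sub continuous_const).continuousOn
    · intro x hx
      left
      have : (1:ℝ) < x := hx
      nlinarith
  · exact (Real.continuous_exp.comp (continuous_const.mul continuous_id)).continuousOn

lemma wgt_pos (ℓ : ℕ) {ζ x : ℝ} (hK : 0 < besselK 1 ζ) (hx : 1 < x) : 0 < wgt ℓ ζ x := by
  unfold wgt
  have h1 : (0:ℝ) < x^2 - 1 := by nlinarith
  positivity

lemma wgt_mul {ζ x : ℝ} (hx : 1 < x) : (x^2 - 1) * wgt 0 ζ x = wgt 1 ζ x := by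
  unfold wgt
  have h1 : (0:ℝ) < x^2 - 1 := by nlinarith
  rw [show ((1:ℕ):ℝ) - 1/2 = (((0:ℕ):ℝ) - 1/2) + 1 by norm_num,
    Real.rpow_add h1, Real.rpow_one]
  ring

theorem stmt15
    (ζ : ℝ) (hζ : 0 < ζ)
    (P0 P1 : ℕ → Polynomial ℝ) (lc0 lc1 : ℕ → ℝ)
    (hdeg0 : ∀ n, (P0 n).natDegree = n)
    (hdeg1 : ∀ n, (P1 n).natDegree = n)
    (hlc0 : ∀ n, (P0 n).leadingCoeff = lc0 n)
    (hlc1 : ∀ n, (P1 n).leadingCoeff = lc1 n)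
    (hlc0pos : ∀ n, 0 < lc0 n)
    (hlc1pos : ∀ n, 0 < lc1 n)
    (horth0 : ∀ m n, (∫ x in Set.Ioi (1 : ℝ),
        (P0 m).eval x * (P0 n).eval x * wgt 0 ζ x) = if m = n then (1 : ℝ) else 0)
    (horth1 : ∀ m n, (∫ x in Set.Ioi (1 : ℝ),
        (P1 m).eval x * (P1 n).eval x * wgt 1 ζ x) = if m = n then (1 : ℝ) else 0)
    (z0 z1 : ℕ → ℕ → ℝ)
    (hzfac0 : ∀ n, P0 n = C (lc0 n) * ∏ i ∈ Finset.Icc 1 n, (X - C (z0 n i)))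
    (hzfac1 : ∀ n, P1 n = C (lc1 n) * ∏ i ∈ Finset.Icc 1 n, (X - C (z1 n i)))
    (hzgt0 : ∀ n i, 1 ≤ i → i ≤ n → 1 < z0 n i)
    (hzgt1 : ∀ n i, 1 ≤ i → i ≤ n → 1 < z1 n i)
    (hzmono0 : ∀ n i j, 1 ≤ i → i < j → j ≤ n → z0 n i < z0 n j)
    (hzmono1 : ∀ n i j, 1 ≤ i → i < j → j ≤ n → z1 n i < z1 n j)
    (n : ℕ) (hn : 1 ≤ n)
    (Q : Polynomial ℝ)
    (hQ : Q = P0 (n + 1) * (P1 n).comp (-X) + (P0 (n + 1)).comp (-X) * P1 n) :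
    Q.natDegree = 2 * n ∧ Q.comp (-X) = Q ∧
    ∃ zq : ℕ → ℝ,
      (∀ i, 1 ≤ i → i ≤ n → z0 (n + 1) i < zq i ∧ zq i < z0 (n + 1) (i + 1)) ∧
      (∀ i, 1 ≤ i → i ≤ n → 1 < zq i) ∧
      (∀ i j, 1 ≤ i → i < j → j ≤ n → zq i < zq j) ∧
      Q = C Q.leadingCoeff *
        ∏ i ∈ Finset.Icc 1 n, ((X - C (zq i)) * (X + C (zq i))) := by

  have hKnn := besselK_nonneg 1 ζ
  have hK : 0 < besselK 1 ζ := by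
    rcases hKnn.lt_or_eq with h | h
    · exact h
    · exfalso
      have h00 := horth0 0 0
      rw [if_pos rfl] at h00
      have hz : ∀ x : ℝ, wgt 0 ζ x = 0 := by
        intro x; unfold wgt; rw [← h, div_zero]
      simp only [hz, mul_zero, MeasureTheory.integral_zero] at h00
      norm_num at h00
  have hwc0 := wgt_contOn 0 ζ
  have hwc1 := wgt_contOn 1 ζ
  have hwpos0 : ∀ x ∈ Set.Ioi (1:ℝ), 0 < wgt 0 ζ x := fun x hx => wgt_pos 0 hK hx
  have hwpos1 : ∀ x ∈ Set.Ioi (1:ℝ), 0 < wgt 1 ζ x := fun x hx => wgt_pos 1 hK hx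
  have hlcne0 : ∀ k, (P0 k).leadingCoeff ≠ 0 := fun k => by
    rw [hlc0 k]; exact (hlc0pos k).ne'
  have hlcne1 : ∀ k, (P1 k).leadingCoeff ≠ 0 := fun k => by
    rw [hlc1 k]; exact (hlc1pos k).ne'
  have hint0 : ∀ m, IntegrableOn (fun x => (P0 m).eval x * (P0 m).eval x * wgt 0 ζ x)
      (Set.Ioi 1) volume := by
    intro m
    by_contra hcon
    have h := horth0 m m
    rw [if_pos rfl, MeasureTheory.integral_undef hcon] at h
    norm_num at h
  have hint1 : ∀ m, IntegrableOn (fun x => (P1 m).eval x * (P1 m).eval x * wgt 1 ζ x)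
      (Set.Ioi 1) volume := by
    intro m
    by_contra hcon
    have h := horth1 m m
    rw [if_pos rfl, MeasureTheory.integral_undef hcon] at h
    norm_num at h
  have AI0 := aux_poly_integrable (wgt 0 ζ) hwc0 hwpos0 P0 hdeg0 hlcne0 hint0
  have POS0 := aux_pos (wgt 0 ζ) hwc0 hwpos0 P0 hdeg0 hlcne0 hint0
  have OR0 := aux_orth (wgt 0 ζ) hwc0 hwpos0 P0 hdeg0 hlcne0 hint0 horth0
  have OR1 := aux_orth (wgt 1 ζ) hwc1 hwpos1 P1 hdeg1 hlcne1 hint1 horth1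
  set xx : ℕ → ℝ := z0 (n+1) with hxxdef
  have hxx1 : ∀ i, 1 ≤ i → i ≤ n+1 → 1 < xx i := fun i h1 h2 => hzgt0 (n+1) i h1 h2
  have hxxlt : ∀ i j, 1 ≤ i → i < j → j ≤ n+1 → xx i < xx j :=
    fun i j h1 h2 h3 => hzmono0 (n+1) i j h1 h2 h3
  have hfac : P0 (n+1) = C (lc0 (n+1)) * ∏ k ∈ Finset.Icc 1 (n+1), (X - C (xx k)) :=
    hzfac0 (n+1)
  have hMorth : ∀ u : Polynomial ℝ, u.natDegree ≤ n →
      (∫ x in Set.Ioi (1:ℝ),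
        (∏ k ∈ Finset.Icc 1 (n+1), (X - C (xx k))).eval x * u.eval x * wgt 0 ζ x) = 0 := by
    intro u hu
    have h := OR0 (n+1) u (by omega)
    have heq : (fun x => (P0 (n+1)).eval x * u.eval x * wgt 0 ζ x)
        = fun x => lc0 (n+1) *
          ((∏ k ∈ Finset.Icc 1 (n+1), (X - C (xx k))).eval x * u.eval x * wgt 0 ζ x) := by
      funext x
      rw [hfac]
      simp only [Polynomial.eval_mul, Polynomial.eval_C]
      ring
    rw [heq, MeasureTheory.integral_const_mul] at h
    rcases mul_eq_zero.mp h with h | h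
    · exact absurd h (hlc0pos (n+1)).ne'
    · exact h
  have hOR1n : ∀ g : Polynomial ℝ, g.natDegree < n →
      (∫ x in Set.Ioi (1:ℝ), (P1 n).eval x * g.eval x * wgt 1 ζ x) = 0 :=
    fun g hg => OR1 n g hg
  have hw01 : ∀ x ∈ Set.Ioi (1:ℝ), (x^2 - 1) * wgt 0 ζ x = wgt 1 ζ x :=
    fun x hx => wgt_mul hx
  have KEY := fun (i : ℕ) (h1 : 1 ≤ i) (h2 : i ≤ n) =>
    key_lemma (wgt 0 ζ) (wgt 1 ζ) hw01 AI0 POS0 n hn xx hxx1 hxxlt hMorth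
      (P1 n) (hdeg1 n) hOR1n i h1 h2
  -- all values of P1 n at the nodes are nonzero
  have hvne : ∀ j, 1 ≤ j → j ≤ n+1 → (P1 n).eval (xx j) ≠ 0 := by
    intro j hj1 hj2 hj0
    have hiff : ∀ i, 1 ≤ i → i ≤ n →
        ((P1 n).eval (xx i) = 0 ↔ (P1 n).eval (xx (i+1)) = 0) :=
      fun i h1 h2 => (KEY i h1 h2).1
    have hup : ∀ d j', 1 ≤ j' → j' + d ≤ n+1 →
        (P1 n).eval (xx j') = 0 → (P1 n).eval (xx (j'+d)) = 0 := by
      intro d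
      induction d with
      | zero => intro j' _ _ h; simpa using h
      | succ d ih =>
        intro j' h1 h2 h
        have h3 : (P1 n).eval (xx (j'+1)) = 0 := (hiff j' h1 (by omega)).mp h
        have h4 := ih (j'+1) (by omega) (by omega) h3
        rw [show j'+1+d = j'+(d+1) from by omega] at h4
        exact h4
    have hdown : ∀ d j', 1 ≤ j' → j' + d ≤ n+1 →
        (P1 n).eval (xx (j'+d)) = 0 → (P1 n).eval (xx j') = 0 := by
      intro d
      induction d with
      | zero => intro j' _ _ h; simpa using h
      | succ d ih =>
        intro j' h1 h2 h
        have h3 : (P1 n).eval (xx (j'+1+d)) = 0 := by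
          rw [show j'+1+d = j'+(d+1) from by omega]; exact h
        have h4 := ih (j'+1) (by omega) (by omega) h3
        exact (hiff j' h1 (by omega)).mpr h4
    have hall : ∀ k, 1 ≤ k → k ≤ n+1 → (P1 n).eval (xx k) = 0 := by
      intro k h1 h2
      rcases le_total k j with h | h
      · refine hdown (j - k) k h1 (by omega) ?_
        rw [show k + (j-k) = j from by omega]
        exact hj0
      · have h5 := hup (k - j) j hj1 (by omega) hj0
        rw [show j + (k-j) = k from by omega] at h5
        exact h5
    have hfac1 : P1 n = C (lc1 n) * ∏ k ∈ Finset.Icc 1 n, (X - C (z1 n k)) := hzfac1 n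
    have hex : ∀ k : ℕ, ∃ m, (k ∈ Finset.Icc 1 (n+1)) →
        (m ∈ Finset.Icc 1 n ∧ xx k = z1 n m) := by
      intro k
      by_cases hk : k ∈ Finset.Icc 1 (n+1)
      · obtain ⟨h1, h2⟩ := Finset.mem_Icc.mp hk
        have h := hall k h1 h2
        rw [hfac1] at h
        simp only [Polynomial.eval_mul, Polynomial.eval_C, Polynomial.eval_prod] at h
        rcases mul_eq_zero.mp h with h | h
        · exact absurd h (hlc1pos n).ne'
        · obtain ⟨m, hm, hm0⟩ := Finset.prod_eq_zero_iff.mp h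
          simp only [Polynomial.eval_sub, Polynomial.eval_X, Polynomial.eval_C] at hm0
          exact ⟨m, fun _ => ⟨hm, by linarith [sub_eq_zero.mp hm0]⟩⟩
      · exact ⟨1, fun h => absurd h hk⟩
    choose f hf using hex
    have hmap : ∀ k ∈ Finset.Icc 1 (n+1), f k ∈ Finset.Icc 1 n :=
      fun k hk => (hf k hk).1
    have hcard : (Finset.Icc 1 n).card < (Finset.Icc 1 (n+1)).card := by
      rw [Nat.card_Icc, Nat.card_Icc]
      omega
    obtain ⟨k1, hk1, k2, hk2, hne, heq⟩ :=
      Finset.exists_ne_map_eq_of_card_lt_of_maps_to hcard hmap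
    have hxeq : xx k1 = xx k2 := by rw [(hf k1 hk1).2, (hf k2 hk2).2, heq]
    obtain ⟨a1, b1⟩ := Finset.mem_Icc.mp hk1
    obtain ⟨a2, b2⟩ := Finset.mem_Icc.mp hk2
    rcases lt_or_gt_of_ne hne with h | h
    · exact absurd hxeq (hxxlt k1 k2 a1 h b2).ne
    · exact absurd hxeq (hxxlt k2 k1 a2 h b1).ne'
  have hvprod : ∀ i, 1 ≤ i → i ≤ n →
      (P1 n).eval (xx i) * (P1 n).eval (xx (i+1)) < 0 := by
    intro i h1 h2
    have h := (KEY i h1 h2).2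
    have hne := mul_ne_zero (hvne i h1 (by omega)) (hvne (i+1) (by omega) (by omega))
    exact lt_of_le_of_ne h hne
  have hP0z : ∀ j, 1 ≤ j → j ≤ n+1 → (P0 (n+1)).eval (xx j) = 0 := by
    intro j h1 h2
    rw [hfac]
    simp only [Polynomial.eval_mul, Polynomial.eval_C, Polynomial.eval_prod]
    apply mul_eq_zero_of_right
    apply Finset.prod_eq_zero (Finset.mem_Icc.mpr ⟨h1, h2⟩)
    simp
  have hQeval : ∀ j, 1 ≤ j → j ≤ n+1 →
      Q.eval (xx j) = (P0 (n+1)).eval (-(xx j)) * (P1 n).eval (xx j) := by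
    intro j h1 h2
    rw [hQ]
    simp only [Polynomial.eval_add, Polynomial.eval_mul, Polynomial.eval_comp,
      Polynomial.eval_neg, Polynomial.eval_X]
    rw [hP0z j h1 h2]
    ring
  have hnegprod : ∀ s t : ℝ, 0 < s → 0 < t →
      0 < (P0 (n+1)).eval (-s) * (P0 (n+1)).eval (-t) := by
    intro s t hs ht
    rw [hfac]
    simp only [Polynomial.eval_mul, Polynomial.eval_C, Polynomial.eval_prod,
      Polynomial.eval_sub, Polynomial.eval_X]
    have hre : lc0 (n+1) * (∏ k ∈ Finset.Icc 1 (n+1), (-s - xx k))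
        * (lc0 (n+1) * ∏ k ∈ Finset.Icc 1 (n+1), (-t - xx k))
        = lc0 (n+1)^2 * ∏ k ∈ Finset.Icc 1 (n+1), ((-s - xx k) * (-t - xx k)) := by
      rw [Finset.prod_mul_distrib]
      ring
    rw [hre]
    apply mul_pos (pow_pos (hlc0pos (n+1)) 2)
    apply Finset.prod_pos
    intro k hk
    obtain ⟨h1, h2⟩ := Finset.mem_Icc.mp hk
    have h3 := hxx1 k h1 h2
    exact mul_pos_of_neg_of_neg (by linarith) (by linarith)
  have hQsign : ∀ i, 1 ≤ i → i ≤ n → Q.eval (xx i) * Q.eval (xx (i+1)) < 0 := by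
    intro i h1 h2
    rw [hQeval i h1 (by omega), hQeval (i+1) (by omega) (by omega)]
    have hp := hnegprod (xx i) (xx (i+1))
      (by linarith [hxx1 i h1 (by omega)]) (by linarith [hxx1 (i+1) (by omega) (by omega)])
    have hv := hvprod i h1 h2
    rw [show (P0 (n+1)).eval (-(xx i)) * (P1 n).eval (xx i)
        * ((P0 (n+1)).eval (-(xx (i+1))) * (P1 n).eval (xx (i+1)))
        = ((P0 (n+1)).eval (-(xx i)) * (P0 (n+1)).eval (-(xx (i+1))))
          * ((P1 n).eval (xx i) * (P1 n).eval (xx (i+1))) from by ring]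
    exact mul_neg_of_pos_of_neg hp hv
  have hexz : ∀ i, 1 ≤ i → i ≤ n → ∃ t, xx i < t ∧ t < xx (i+1) ∧ Q.eval t = 0 := by
    intro i h1 h2
    exact aux_ivt Q (xx i) (xx (i+1)) (hxxlt i (i+1) h1 (by omega) (by omega))
      (hQsign i h1 h2)
  classical
  set zq : ℕ → ℝ := fun i => if h : 1 ≤ i ∧ i ≤ n then (hexz i h.1 h.2).choose else 0
    with hzqdef
  have hzq1 : ∀ i, 1 ≤ i → i ≤ n → xx i < zq i ∧ zq i < xx (i+1) ∧ Q.eval (zq i) = 0 := by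
    intro i h1 h2
    have : zq i = (hexz i h1 h2).choose := by
      rw [hzqdef]
      exact dif_pos ⟨h1, h2⟩
    rw [this]
    exact (hexz i h1 h2).choose_spec
  have hzqgt1 : ∀ i, 1 ≤ i → i ≤ n → 1 < zq i :=
    fun i h1 h2 => lt_trans (hxx1 i h1 (by omega)) (hzq1 i h1 h2).1
  have hzqmono : ∀ i j, 1 ≤ i → i < j → j ≤ n → zq i < zq j := by
    intro i j h1 h2 h3
    have hi := hzq1 i h1 (by omega)
    have hj := hzq1 j (by omega) h3
    have hle : xx (i+1) ≤ xx j := by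
      rcases eq_or_lt_of_le (show i+1 ≤ j from by omega) with h | h
      · rw [h]
      · exact (hxxlt (i+1) j (by omega) h (by omega)).le
    linarith [hi.2.1, hj.1]
  -- evenness
  have hcc : ∀ p : Polynomial ℝ, (p.comp (-X)).comp (-X) = p := by
    intro p
    rw [Polynomial.comp_assoc]
    simp
  have hQc : Q.comp (-X) = Q := by
    rw [hQ]
    simp only [Polynomial.add_comp, Polynomial.mul_comp]
    rw [hcc, hcc]
    ring
  have hQeven : ∀ t : ℝ, Q.eval (-t) = Q.eval t := by
    intro t
    conv_rhs => rw [← hQc]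
    rw [Polynomial.eval_comp]
    simp
  have hQne : Q ≠ 0 := by
    intro h
    have h2 := hQsign 1 le_rfl hn
    rw [h] at h2
    simp at h2
  -- degree computations
  have hnX : (-X : Polynomial ℝ).natDegree = 1 := by
    rw [Polynomial.natDegree_neg, Polynomial.natDegree_X]
  have hd1 : ((P1 n).comp (-X)).natDegree = n := by
    rw [Polynomial.natDegree_comp, hnX, hdeg1 n, mul_one]
  have hd0 : ((P0 (n+1)).comp (-X)).natDegree = n+1 := by
    rw [Polynomial.natDegree_comp, hnX, hdeg0 (n+1), mul_one]
  have hlcneg : (-X : Polynomial ℝ).leadingCoeff = -1 := by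
    rw [Polynomial.leadingCoeff_neg, Polynomial.leadingCoeff_X]
  have hcoeff : Q.coeff (2*n+1) = 0 := by
    rw [hQ, Polynomial.coeff_add]
    have e1 : (P0 (n+1) * (P1 n).comp (-X)).coeff (2*n+1)
        = (P0 (n+1)).leadingCoeff * ((P1 n).comp (-X)).leadingCoeff := by
      have h := Polynomial.coeff_mul_degree_add_degree (P0 (n+1)) ((P1 n).comp (-X))
      rw [hdeg0 (n+1), hd1] at h
      rw [show 2*n+1 = n+1+n from by omega]
      exact h
    have e2 : ((P0 (n+1)).comp (-X) * P1 n).coeff (2*n+1)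
        = ((P0 (n+1)).comp (-X)).leadingCoeff * (P1 n).leadingCoeff := by
      have h := Polynomial.coeff_mul_degree_add_degree ((P0 (n+1)).comp (-X)) (P1 n)
      rw [hd0, hdeg1 n] at h
      rw [show 2*n+1 = n+1+n from by omega]
      exact h
    rw [e1, e2]
    have l1 : ((P1 n).comp (-X)).leadingCoeff = (P1 n).leadingCoeff * (-1)^n := by
      rw [Polynomial.leadingCoeff_comp (by rw [hnX]; omega), hlcneg, hdeg1 n]
    have l0 : ((P0 (n+1)).comp (-X)).leadingCoeff
        = (P0 (n+1)).leadingCoeff * (-1)^(n+1) := by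
      rw [Polynomial.leadingCoeff_comp (by rw [hnX]; omega), hlcneg, hdeg0 (n+1)]
    rw [l1, l0, pow_succ]
    ring
  have hQle : Q.natDegree ≤ 2*n+1 := by
    rw [hQ]
    refine le_trans (Polynomial.natDegree_add_le _ _) (max_le ?_ ?_)
    · exact le_trans Polynomial.natDegree_mul_le (by rw [hdeg0 (n+1), hd1]; omega)
    · exact le_trans Polynomial.natDegree_mul_le (by rw [hd0, hdeg1 n]; omega)
  have hQle2 : Q.natDegree ≤ 2*n := by
    by_contra hcon
    push_neg at hcon
    have hdeq : Q.natDegree = 2*n+1 := by omega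
    have hlz : Q.leadingCoeff = 0 := by
      rw [Polynomial.leadingCoeff, hdeq]
      exact hcoeff
    exact hQne (Polynomial.leadingCoeff_eq_zero.mp hlz)
  -- root set and divisibility
  set S : Finset ℝ := (Finset.Icc 1 n).image zq ∪ (Finset.Icc 1 n).image (fun i => -zq i)
    with hS
  have hinjzq : ∀ x ∈ Finset.Icc 1 n, ∀ y ∈ Finset.Icc 1 n, zq x = zq y → x = y := by
    intro x hx y hy hxy
    obtain ⟨a1, b1⟩ := Finset.mem_Icc.mp hx
    obtain ⟨a2, b2⟩ := Finset.mem_Icc.mp hy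
    by_contra hne
    rcases lt_or_gt_of_ne hne with h | h
    · exact absurd hxy (hzqmono x y a1 h b2).ne
    · exact absurd hxy (hzqmono y x a2 h b1).ne'
  have hinjnzq : ∀ x ∈ Finset.Icc 1 n, ∀ y ∈ Finset.Icc 1 n,
      -zq x = -zq y → x = y := by
    intro x hx y hy hxy
    exact hinjzq x hx y hy (by linarith)
  have hdisj : Disjoint ((Finset.Icc 1 n).image zq)
      ((Finset.Icc 1 n).image (fun i => -zq i)) := by
    rw [Finset.disjoint_left]
    intro a ha hb
    obtain ⟨i, hi, hieq⟩ := Finset.mem_image.mp ha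
    obtain ⟨j, hj, hjeq⟩ := Finset.mem_image.mp hb
    obtain ⟨a1, b1⟩ := Finset.mem_Icc.mp hi
    obtain ⟨a2, b2⟩ := Finset.mem_Icc.mp hj
    have h1 := hzqgt1 i a1 b1
    have h2 := hzqgt1 j a2 b2
    rw [← hieq] at hjeq
    have h3 : -zq j = zq i := hjeq
    linarith
  have hScard : S.card = 2*n := by
    rw [hS, Finset.card_union_of_disjoint hdisj,
      Finset.card_image_of_injOn (fun x hx y hy h => hinjzq x hx y hy h),
      Finset.card_image_of_injOn (fun x hx y hy h => hinjnzq x hx y hy h),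
      Nat.card_Icc]
    omega
  have hroots : ∀ a ∈ S, Q.eval a = 0 := by
    intro a ha
    rw [hS, Finset.mem_union] at ha
    rcases ha with ha | ha
    · obtain ⟨i, hi, hieq⟩ := Finset.mem_image.mp ha
      obtain ⟨a1, b1⟩ := Finset.mem_Icc.mp hi
      rw [← hieq]
      exact (hzq1 i a1 b1).2.2
    · obtain ⟨i, hi, hieq⟩ := Finset.mem_image.mp ha
      obtain ⟨a1, b1⟩ := Finset.mem_Icc.mp hi
      rw [← hieq]
      show Q.eval (-zq i) = 0
      rw [hQeven (zq i)]
      exact (hzq1 i a1 b1).2.2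
  have hdvd := aux_dvd' S Q hroots
  have hSmonic : (∏ a ∈ S, (X - C a)).Monic :=
    monic_prod_of_monic _ _ fun a _ => monic_X_sub_C _
  have hSdeg : (∏ a ∈ S, (X - C a)).natDegree = 2*n := by
    rw [Polynomial.natDegree_prod _ _ (fun a _ => Polynomial.X_sub_C_ne_zero _)]
    simp [Polynomial.natDegree_X_sub_C, hScard]
  have hge : 2*n ≤ Q.natDegree := by
    rw [← hSdeg]
    exact Polynomial.natDegree_le_of_dvd hdvd hQne
  have hQdeg : Q.natDegree = 2*n := le_antisymm hQle2 hge
  obtain ⟨u, hu⟩ := hdvd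
  have hune : u ≠ 0 := by
    intro h
    rw [h, mul_zero] at hu
    exact hQne hu
  have hudeg : u.natDegree = 0 := by
    have h := Polynomial.natDegree_mul hSmonic.ne_zero hune
    rw [← hu, hQdeg, hSdeg] at h
    omega
  have hueq : u = C (u.coeff 0) := Polynomial.eq_C_of_natDegree_eq_zero hudeg
  have hlcQ : Q.leadingCoeff = u.coeff 0 := by
    rw [hu, Polynomial.leadingCoeff_mul, hSmonic.leadingCoeff, one_mul]
    conv_lhs => rw [hueq]
    rw [Polynomial.leadingCoeff_C]
  have hprodS : (∏ a ∈ S, (X - C a))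
      = ∏ i ∈ Finset.Icc 1 n, ((X - C (zq i)) * (X + C (zq i))) := by
    rw [hS, Finset.prod_union hdisj, Finset.prod_image hinjzq, Finset.prod_image hinjnzq,
      ← Finset.prod_mul_distrib]
    apply Finset.prod_congr rfl
    intro i _
    rw [Polynomial.C_neg, sub_neg_eq_add]
  refine ⟨hQdeg, hQc, zq, ?_, ?_, ?_, ?_⟩
  · intro i h1 h2
    exact ⟨(hzq1 i h1 h2).1, (hzq1 i h1 h2).2.1⟩
  · exact hzqgt1
  · exact hzqmono
  · rw [← hprodS, hlcQ, ← hueq, hu, mul_comm]
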